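/- Let 𝒮 ⊆ ℝ^{n×n}, let 𝒜_n be the (open) set of matrices whose eigenvalue pairs never sum to zero, and suppose Ā₀ ∈ relint(𝒮) ∩ 𝒜_n. Fix Q ∈ ℝ^{n×n} and let Φ(A,Q) denote the unique solution of A P + P Aᵀ = -Q for A ∈ 𝒜_n. Then Φ(Ã₁,Q) = Φ(Ã₂,Q) for all Ã₁, Ã₂ ∈ 𝒮 ∩ 𝒜_n if and only if Φ(Ã₁,Q) = Φ(Ã₂,Q) for all Ã₁, Ã₂ ∈ aff(𝒮) ∩ 𝒜_n, where aff(𝒮) is the affine hull of 𝒮. -/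

import Mathlib

open Matrix Polynomial

/-- Frobenius norm of a real matrix. -/
noncomputable def frobNorm {n : ℕ} (M : Matrix (Fin n) (Fin n) ℝ) : ℝ :=
  Real.sqrt (∑ i, ∑ j, (M i j) ^ 2)

/-- The set `𝒜_n` of matrices whose (complex) eigenvalue pairs never sum to zero. -/
def setAn (n : ℕ) : Set (Matrix (Fin n) (Fin n) ℝ) :=
  {A | ∀ lam ∈ spectrum ℂ (A.map (algebraMap ℝ ℂ)),
      ∀ lam' ∈ spectrum ℂ (A.map (algebraMap ℝ ℂ)), lam + lam' ≠ 0}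

/-- Relative interior of a set of matrices (w.r.t. Frobenius-norm balls and the
affine hull). -/
noncomputable def relintM {n : ℕ} (S : Set (Matrix (Fin n) (Fin n) ℝ)) :
    Set (Matrix (Fin n) (Fin n) ℝ) :=
  {A ∈ S | ∃ ε > (0 : ℝ), ∀ B ∈ (affineSpan ℝ S : Set (Matrix (Fin n) (Fin n) ℝ)),
      frobNorm (B - A) < ε → B ∈ S}

/-! ### Auxiliary machinery -/

section Aux

variable {n : ℕ}

/-- Matrix of the Lyapunov operator `P ↦ A*P + P*Aᵀ` acting on vectorized matrices. -/
def lyapMat {R : Type*} [CommRing R] (A : Matrix (Fin n) (Fin n) R) :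
    Matrix (Fin n × Fin n) (Fin n × Fin n) R :=
  Matrix.of fun p q =>
    A p.1 q.1 * (if p.2 = q.2 then 1 else 0) + (if p.1 = q.1 then 1 else 0) * A p.2 q.2

lemma lyapMat_mulVec {R : Type*} [CommRing R] (A P : Matrix (Fin n) (Fin n) R) :
    (lyapMat A).mulVec (fun p => P p.1 p.2) = fun p => (A * P + P * Aᵀ) p.1 p.2 := by
  funext p
  simp only [lyapMat, Matrix.mulVec, dotProduct, Matrix.of_apply, Matrix.add_apply,
    Matrix.mul_apply, Matrix.transpose_apply]
  rw [Fintype.sum_prod_type]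
  simp only [add_mul, Finset.sum_add_distrib]
  congr 1
  · refine Finset.sum_congr rfl fun k _ => ?_
    simp [mul_comm, mul_assoc, mul_left_comm]
  · rw [Finset.sum_comm]
    refine Finset.sum_congr rfl fun k _ => ?_
    simp [mul_comm, mul_assoc, mul_left_comm]

lemma lyapMat_map {R S : Type*} [CommRing R] [CommRing S] (f : R →+* S)
    (A : Matrix (Fin n) (Fin n) R) :
    (lyapMat A).map f = lyapMat (A.map f) := by
  funext p q
  simp only [lyapMat, Matrix.map_apply, Matrix.of_apply, map_add, f.map_mul, apply_ite f,
    _root_.map_one, map_zero]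

end Aux

section Spectral

variable {m : Type*} [Fintype m] [DecidableEq m]

lemma mem_spectrum_iff_det' (B : Matrix m m ℂ) (l : ℂ) :
    l ∈ spectrum ℂ B ↔ (l • (1 : Matrix m m ℂ) - B).det = 0 := by
  rw [spectrum.mem_iff, Matrix.isUnit_iff_isUnit_det, isUnit_iff_ne_zero, not_not,
    Algebra.algebraMap_eq_smul_one]

lemma exists_eigenvector_of_mem_spectrum' {B : Matrix m m ℂ} {l : ℂ}
    (h : l ∈ spectrum ℂ B) : ∃ v : m → ℂ, v ≠ 0 ∧ B.mulVec v = l • v := by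
  rw [mem_spectrum_iff_det'] at h
  obtain ⟨v, hv0, hv⟩ := (Matrix.exists_mulVec_eq_zero_iff).2 h
  refine ⟨v, hv0, ?_⟩
  rw [Matrix.sub_mulVec, Matrix.smul_mulVec, Matrix.one_mulVec, sub_eq_zero] at hv
  exact hv.symm

lemma eval_charpoly'' (M : Matrix m m ℂ) (t : ℂ) :
    (M.charpoly).eval t = (t • (1 : Matrix m m ℂ) - M).det := by
  rw [Matrix.charpoly]
  rw [show (M.charmatrix.det).eval t = (Polynomial.evalRingHom t) M.charmatrix.det from rfl]
  rw [RingHom.map_det]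
  congr 1
  funext i j
  by_cases h : i = j <;>
    simp [charmatrix_apply, Matrix.map_apply, Matrix.sub_apply, Matrix.smul_apply,
      Matrix.one_apply, Matrix.diagonal_apply, h]

lemma powMulCommLyap {B X C : Matrix m m ℂ} (h : B * X = X * C) (k : ℕ) :
    B ^ k * X = X * C ^ k := by
  induction k with
  | zero => simp
  | succ k ih =>
    rw [pow_succ, pow_succ, mul_assoc (B ^ k), h, ← mul_assoc, ih, mul_assoc]

lemma aevalMulCommLyap {B X C : Matrix m m ℂ} (h : B * X = X * C) (p : ℂ[X]) :
    (aeval B p) * X = X * aeval C p := by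
  induction p using Polynomial.induction_on' with
  | add p q hp hq => rw [map_add, map_add, add_mul, mul_add, hp, hq]
  | monomial k a =>
    rw [aeval_monomial, aeval_monomial, mul_assoc, powMulCommLyap h, ← mul_assoc,
      Algebra.commutes a X, mul_assoc]

lemma lyapC_injective {B : Matrix m m ℂ}
    (h : ∀ l ∈ spectrum ℂ B, ∀ l' ∈ spectrum ℂ B, l + l' ≠ 0)
    (X : Matrix m m ℂ) (hX : B * X + X * Bᵀ = 0) : X = 0 := by
  have hBX : B * X = X * (-Bᵀ) := by
    rw [mul_neg, eq_neg_iff_add_eq_zero]; exact hX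
  have h1 : X * aeval (-Bᵀ) B.charpoly = 0 := by
    rw [← aevalMulCommLyap hBX, Matrix.aeval_self_charpoly, zero_mul]
  have hdet : (aeval (-Bᵀ) B.charpoly).det ≠ 0 := by
    have hsplit : B.charpoly.Splits := IsAlgClosed.splits _
    have hfac := hsplit.eq_prod_roots_of_monic (Matrix.charpoly_monic B)
    have hfac' : B.charpoly = (B.charpoly.roots.toList.map (fun a => Polynomial.X - C a)).prod := by
      conv_lhs => rw [hfac]
      rw [← Multiset.coe_toList B.charpoly.roots, Multiset.map_coe, Multiset.prod_coe,
        Multiset.coe_toList]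
    rw [hfac', ← List.prod_hom _ (aeval (-Bᵀ) : ℂ[X] →ₐ[ℂ] Matrix m m ℂ),
      ← Matrix.coe_detMonoidHom, ← List.prod_hom _ (Matrix.detMonoidHom : Matrix m m ℂ →* ℂ),
      List.map_map, List.map_map]
    rw [Ne, List.prod_eq_zero_iff]
    rw [List.mem_map]
    rintro ⟨a, ha, hdet0⟩
    have haspec : a ∈ spectrum ℂ B := by
      rw [mem_spectrum_iff_det', ← eval_charpoly'']
      exact Polynomial.isRoot_of_mem_roots (Multiset.mem_toList.1 ha)
    have hna : -a ∉ spectrum ℂ B := fun hna => h a haspec (-a) hna (by ring)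
    rw [mem_spectrum_iff_det'] at hna
    apply hna
    simp only [Function.comp_apply, Matrix.coe_detMonoidHom, map_sub, aeval_X, aeval_C] at hdet0
    have heq : (-Bᵀ - algebraMap ℂ (Matrix m m ℂ) a) = (((-a) • (1 : Matrix m m ℂ)) - B)ᵀ := by
      rw [Algebra.algebraMap_eq_smul_one, Matrix.transpose_sub, Matrix.transpose_smul,
        Matrix.transpose_one, neg_smul]
      abel
    rw [heq, Matrix.det_transpose] at hdet0
    exact hdet0
  calc X = X * (aeval (-Bᵀ) B.charpoly * (aeval (-Bᵀ) B.charpoly)⁻¹) := by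
        rw [Matrix.mul_nonsing_inv _ (isUnit_iff_ne_zero.2 hdet), mul_one]
    _ = 0 := by rw [← mul_assoc, h1, zero_mul]

end Spectral

section RealBridge

variable {n : ℕ}

/-- If `A ∈ 𝒜_n` then the real Lyapunov operator is injective. -/
lemma real_lyap_zero {A : Matrix (Fin n) (Fin n) ℝ} (hA : A ∈ setAn n)
    {X : Matrix (Fin n) (Fin n) ℝ} (hX : A * X + X * Aᵀ = 0) : X = 0 := by
  have hc : (A.map (algebraMap ℝ ℂ)) * (X.map (algebraMap ℝ ℂ))
      + (X.map (algebraMap ℝ ℂ)) * (A.map (algebraMap ℝ ℂ))ᵀ = 0 := by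
    rw [← Matrix.map_mul, ← Matrix.transpose_map, ← Matrix.map_mul,
      ← Matrix.map_add _ (map_add (algebraMap ℝ ℂ)), hX]
    funext i j
    simp
  have h0 := lyapC_injective hA _ hc
  funext i j
  have := congrFun (congrFun h0 i) j
  simp only [Matrix.map_apply, Matrix.zero_apply] at this ⊢
  exact (algebraMap ℝ ℂ).injective (this.trans (map_zero _).symm)

lemma det_lyapMat_ne_zero_of_setAn {A : Matrix (Fin n) (Fin n) ℝ} (hA : A ∈ setAn n) :
    (lyapMat A).det ≠ 0 := by
  intro h0
  obtain ⟨v, hv0, hv⟩ := Matrix.exists_mulVec_eq_zero_iff.2 h0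
  set X : Matrix (Fin n) (Fin n) ℝ := Matrix.of fun i j => v (i, j) with hXdef
  have hvec : (fun p : Fin n × Fin n => X p.1 p.2) = v := rfl
  have hlyap : A * X + X * Aᵀ = 0 := by
    have h1 := lyapMat_mulVec A X
    rw [hvec, hv] at h1
    funext i j
    exact (congrFun h1.symm (i, j))
  have hX0 := real_lyap_zero hA hlyap
  apply hv0
  funext p
  have := congrFun (congrFun hX0 p.1) p.2
  exact this

lemma setAn_of_det_lyapMat_ne_zero {A : Matrix (Fin n) (Fin n) ℝ}
    (h : (lyapMat A).det ≠ 0) : A ∈ setAn n := by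
  by_contra hA
  simp only [setAn, Set.mem_setOf_eq, not_forall] at hA
  obtain ⟨l, hl, l', hl', hsum⟩ := hA
  rw [not_not] at hsum
  set B := A.map (algebraMap ℝ ℂ) with hB
  obtain ⟨u, hu0, hu⟩ := exists_eigenvector_of_mem_spectrum' hl
  obtain ⟨w, hw0, hw⟩ := exists_eigenvector_of_mem_spectrum' hl'
  set Xc : Matrix (Fin n) (Fin n) ℂ := Matrix.of fun i j => u i * w j with hXc
  have hXlyap : B * Xc + Xc * Bᵀ = 0 := by
    funext i j
    have h1 : (B * Xc) i j = (B.mulVec u) i * w j := by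
      simp only [Matrix.mul_apply, hXc, Matrix.of_apply, Matrix.mulVec, dotProduct,
        Finset.sum_mul, mul_assoc]
    have h2 : (Xc * Bᵀ) i j = u i * (B.mulVec w) j := by
      simp only [Matrix.mul_apply, hXc, Matrix.of_apply, Matrix.transpose_apply, Matrix.mulVec,
        dotProduct, Finset.mul_sum]
      refine Finset.sum_congr rfl fun k _ => by ring
    simp only [Matrix.add_apply, h1, h2, hu, hw, Matrix.zero_apply, Pi.smul_apply,
      smul_eq_mul]
    have : l * u i * w j + u i * (l' * w j) = (l + l') * (u i * w j) := by ring
    rw [this, hsum, zero_mul]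
  -- get a nonzero kernel vector for `lyapMat B`
  have hdetB : (lyapMat B).det = 0 := by
    rw [← Matrix.exists_mulVec_eq_zero_iff]
    refine ⟨(fun p : Fin n × Fin n => Xc p.1 p.2), ?_, ?_⟩
    · obtain ⟨i, hi⟩ := Function.ne_iff.1 hu0
      obtain ⟨j, hj⟩ := Function.ne_iff.1 hw0
      intro hz
      have := congrFun hz (i, j)
      simp only [hXc, Matrix.of_apply, Pi.zero_apply] at this
      exact (mul_ne_zero hi hj) this
    · rw [lyapMat_mulVec B Xc, hXlyap]
      funext p
      simp
  apply h
  have hmap : (lyapMat A).map (algebraMap ℝ ℂ) = lyapMat B := lyapMat_map _ A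
  have : (algebraMap ℝ ℂ) (lyapMat A).det = 0 := by
    rw [RingHom.map_det]
    have : (algebraMap ℝ ℂ).mapMatrix (lyapMat A) = lyapMat B := hmap
    rw [this, hdetB]
  exact (algebraMap ℝ ℂ).injective (this.trans (map_zero _).symm)

/-- Existence of solutions to the Lyapunov equation when the operator is invertible. -/
lemma exists_lyap_solution {A Q : Matrix (Fin n) (Fin n) ℝ}
    (hdet : (lyapMat A).det ≠ 0) : ∃ P, A * P + P * Aᵀ = -Q := by
  set M := lyapMat A with hM
  set q : Fin n × Fin n → ℝ := fun p => (-Q) p.1 p.2 with hq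
  refine ⟨Matrix.of fun i j => (M⁻¹.mulVec q) (i, j), ?_⟩
  set P : Matrix (Fin n) (Fin n) ℝ := Matrix.of fun i j => (M⁻¹.mulVec q) (i, j) with hP
  have hvec : (fun p : Fin n × Fin n => P p.1 p.2) = M⁻¹.mulVec q := rfl
  have h1 := lyapMat_mulVec A P
  rw [hvec] at h1
  rw [Matrix.mulVec_mulVec, Matrix.mul_nonsing_inv _ (isUnit_iff_ne_zero.2 hdet),
    Matrix.one_mulVec] at h1
  funext i j
  exact (congrFun h1 (i, j)).symm

/-- Uniqueness of solutions over `𝒜_n`. -/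
lemma lyap_unique {A : Matrix (Fin n) (Fin n) ℝ} (hA : A ∈ setAn n)
    {Q P₁ P₂ : Matrix (Fin n) (Fin n) ℝ}
    (h1 : A * P₁ + P₁ * Aᵀ = -Q) (h2 : A * P₂ + P₂ * Aᵀ = -Q) : P₁ = P₂ := by
  have : A * (P₁ - P₂) + (P₁ - P₂) * Aᵀ = 0 := by
    have := sub_eq_zero.2 (h1.trans h2.symm)
    rw [← this]
    noncomm_ring
  have := real_lyap_zero hA this
  exact sub_eq_zero.1 this

lemma frobNorm_nonneg (M : Matrix (Fin n) (Fin n) ℝ) : 0 ≤ frobNorm M :=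
  Real.sqrt_nonneg _

lemma frobNorm_smul (t : ℝ) (M : Matrix (Fin n) (Fin n) ℝ) :
    frobNorm (t • M) = |t| * frobNorm M := by
  unfold frobNorm
  have : ∑ i, ∑ j, ((t • M) i j) ^ 2 = t ^ 2 * ∑ i, ∑ j, (M i j) ^ 2 := by
    simp only [Matrix.smul_apply, smul_eq_mul, mul_pow, Finset.mul_sum]
  rw [this, Real.sqrt_mul (sq_nonneg t), Real.sqrt_sq_eq_abs]

end RealBridge

/-- If `Ā₀ ∈ relint(𝒮) ∩ 𝒜_n`, then the solution of the Lyapunov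
equation is constant over `𝒮 ∩ 𝒜_n` iff it is constant over `aff(𝒮) ∩ 𝒜_n`
(stated via: any two solutions for any two such matrices coincide). -/
theorem stmt_17 (n : ℕ) (S : Set (Matrix (Fin n) (Fin n) ℝ))
    (Q Abar₀ : Matrix (Fin n) (Fin n) ℝ)
    (hA0 : Abar₀ ∈ relintM S ∩ setAn n) :
    (∀ A₁ ∈ S ∩ setAn n, ∀ A₂ ∈ S ∩ setAn n,
        ∀ P₁ P₂ : Matrix (Fin n) (Fin n) ℝ,
          A₁ * P₁ + P₁ * A₁ᵀ = -Q → A₂ * P₂ + P₂ * A₂ᵀ = -Q → P₁ = P₂) ↔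
      (∀ A₁ ∈ (affineSpan ℝ S : Set (Matrix (Fin n) (Fin n) ℝ)) ∩ setAn n,
        ∀ A₂ ∈ (affineSpan ℝ S : Set (Matrix (Fin n) (Fin n) ℝ)) ∩ setAn n,
          ∀ P₁ P₂ : Matrix (Fin n) (Fin n) ℝ,
            A₁ * P₁ + P₁ * A₁ᵀ = -Q → A₂ * P₂ + P₂ * A₂ᵀ = -Q → P₁ = P₂) := by
  obtain ⟨⟨hA0S, ε, hε, hball⟩, hA0An⟩ := hA0
  constructor
  · -- hard direction
    intro H
    have hdet0 : (lyapMat Abar₀).det ≠ 0 := det_lyapMat_ne_zero_of_setAn hA0An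
    obtain ⟨P₀, hP₀⟩ := exists_lyap_solution (Q := Q) hdet0
    -- key: any solution over the affine hull equals P₀
    have key : ∀ A ∈ (affineSpan ℝ S : Set (Matrix (Fin n) (Fin n) ℝ)) ∩ setAn n,
        ∀ P : Matrix (Fin n) (Fin n) ℝ, A * P + P * Aᵀ = -Q → P = P₀ := by
      rintro A ⟨haff, hAn⟩ P hP
      set Δ : Matrix (Fin n) (Fin n) ℝ := A - Abar₀ with hΔ
      set Apoly : Matrix (Fin n) (Fin n) ℝ[X] :=
        Abar₀.map Polynomial.C + (Polynomial.X : ℝ[X]) • Δ.map Polynomial.C with hApoly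
      have hApoly_eval : ∀ t : ℝ, Apoly.map (Polynomial.evalRingHom t) = Abar₀ + t • Δ := by
        intro t
        funext i j
        simp only [hApoly, Matrix.map_apply, Matrix.add_apply, Matrix.smul_apply, smul_eq_mul,
          Polynomial.coe_evalRingHom, Polynomial.eval_add, Polynomial.eval_mul,
          Polynomial.eval_C, Polynomial.eval_X]
      set dP : ℝ[X] := (lyapMat Apoly).det with hdP
      have hdeval : ∀ t : ℝ, dP.eval t = (lyapMat (Abar₀ + t • Δ)).det := by
        intro t
        rw [show dP.eval t = (Polynomial.evalRingHom t) dP from rfl, hdP, RingHom.map_det]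
        congr 1
        rw [show (Polynomial.evalRingHom t).mapMatrix (lyapMat Apoly)
            = (lyapMat Apoly).map (Polynomial.evalRingHom t) from rfl,
          lyapMat_map, hApoly_eval]
      have hd0 : dP.eval 0 ≠ 0 := by
        rw [hdeval 0]
        simpa using hdet0
      have hdP_ne : dP ≠ 0 := fun h => hd0 (by rw [h]; simp)
      have hA1 : Abar₀ + (1 : ℝ) • Δ = A := by rw [one_smul, hΔ]; abel
      have hd1 : dP.eval 1 ≠ 0 := by
        rw [hdeval 1, hA1]
        exact det_lyapMat_ne_zero_of_setAn hAn
      -- membership of line points in S for small t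
      have hmem_aff : ∀ t : ℝ, Abar₀ + t • Δ ∈
          (affineSpan ℝ S : Set (Matrix (Fin n) (Fin n) ℝ)) := by
        intro t
        have := (affineSpan ℝ S).smul_vsub_vadd_mem t haff
          (subset_affineSpan ℝ S hA0S) (subset_affineSpan ℝ S hA0S)
        simpa [hΔ, vsub_eq_sub, vadd_eq_add, add_comm] using this
      set δ : ℝ := ε / (frobNorm Δ + 1) with hδ
      have hfrobpos : (0 : ℝ) < frobNorm Δ + 1 := by
        have := frobNorm_nonneg Δ; linarith
      have hδpos : 0 < δ := div_pos hε hfrobpos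
      have hS : ∀ t : ℝ, |t| < δ → Abar₀ + t • Δ ∈ S := by
        intro t ht
        refine hball _ (hmem_aff t) ?_
        have : Abar₀ + t • Δ - Abar₀ = t • Δ := by abel
        rw [this, frobNorm_smul]
        calc |t| * frobNorm Δ ≤ |t| * (frobNorm Δ + 1) := by
              have := abs_nonneg t
              nlinarith [frobNorm_nonneg Δ]
          _ < δ * (frobNorm Δ + 1) := by
              exact mul_lt_mul_of_pos_right ht hfrobpos
          _ = ε := by
              rw [hδ, div_mul_cancel₀]
              exact ne_of_gt hfrobpos
      -- the good parameter set is infinite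
      set T : Set ℝ := (Set.Ioo 0 δ) \ {t | dP.IsRoot t} with hT
      have hTinf : T.Infinite :=
        (Set.Ioo_infinite hδpos).diff (Polynomial.finite_setOf_isRoot hdP_ne)
      -- the polynomial identity vector
      set q : Fin n × Fin n → ℝ := fun p => (-Q) p.1 p.2 with hq
      set vP : (Fin n × Fin n) → ℝ[X] := fun p =>
        ((lyapMat Apoly).adjugate.mulVec (fun r => Polynomial.C (q r))) p
          - dP * Polynomial.C (P₀ p.1 p.2) with hvP
      -- evaluation of the polynomial vector
      have heval : ∀ (t : ℝ) (p : Fin n × Fin n), (vP p).eval t =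
          ((lyapMat (Abar₀ + t • Δ)).adjugate.mulVec q) p
            - dP.eval t * P₀ p.1 p.2 := by
        intro t p
        rw [hvP]
        simp only [eval_sub, eval_mul, eval_C]
        congr 1
        have hadj : ((lyapMat Apoly).adjugate).map (Polynomial.evalRingHom t)
            = (lyapMat (Abar₀ + t • Δ)).adjugate := by
          have := RingHom.map_adjugate (Polynomial.evalRingHom t) (lyapMat Apoly)
          rw [show ((Polynomial.evalRingHom t).mapMatrix (lyapMat Apoly)).adjugate
              = ((lyapMat Apoly).map (Polynomial.evalRingHom t)).adjugate from rfl,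
            lyapMat_map, hApoly_eval] at this
          exact this
        rw [← hadj]
        simp only [Matrix.mulVec, dotProduct, Matrix.map_apply]
        rw [Polynomial.eval_finset_sum]
        refine Finset.sum_congr rfl fun r _ => by simp
      -- each component polynomial vanishes on T
      have hvanish : ∀ p : Fin n × Fin n, vP p = 0 := by
        intro p
        apply Polynomial.eq_zero_of_infinite_isRoot
        apply Set.Infinite.mono _ hTinf
        intro t ht
        obtain ⟨⟨ht0, htδ⟩, htroot⟩ := ht
        have htd : dP.eval t ≠ 0 := htroot
        set At : Matrix (Fin n) (Fin n) ℝ := Abar₀ + t • Δ with hAt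
        have hAtS : At ∈ S := hS t (by rw [abs_of_pos ht0]; exact htδ)
        have hAtdet : (lyapMat At).det ≠ 0 := by rw [← hdeval]; exact htd
        have hAtAn : At ∈ setAn n := setAn_of_det_lyapMat_ne_zero hAtdet
        obtain ⟨Pt, hPt⟩ := exists_lyap_solution (Q := Q) hAtdet
        have hPtP₀ : Pt = P₀ := H At ⟨hAtS, hAtAn⟩ Abar₀ ⟨hA0S, hA0An⟩ Pt P₀ hPt hP₀
        rw [hPtP₀] at hPt
        -- M_t.mulVec (vec P₀) = q
        have hMv : (lyapMat At).mulVec (fun r : Fin n × Fin n => P₀ r.1 r.2) = q := by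
          rw [lyapMat_mulVec, hPt]
        have hadjq : (lyapMat At).adjugate.mulVec q
            = (lyapMat At).det • (fun r : Fin n × Fin n => P₀ r.1 r.2) := by
          rw [← hMv, Matrix.mulVec_mulVec, Matrix.adjugate_mul, Matrix.smul_mulVec,
            Matrix.one_mulVec]
        show (vP p).IsRoot t
        rw [Polynomial.IsRoot, heval t p, hadjq]
        simp only [Pi.smul_apply, smul_eq_mul]
        rw [hdeval t]
        ring
      -- evaluate at t = 1
      have hMv1 : (lyapMat A).mulVec (fun r : Fin n × Fin n => P r.1 r.2) = q := by
        rw [lyapMat_mulVec, hP]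
      have hadjq1 : (lyapMat A).adjugate.mulVec q
          = (lyapMat A).det • (fun r : Fin n × Fin n => P r.1 r.2) := by
        rw [← hMv1, Matrix.mulVec_mulVec, Matrix.adjugate_mul, Matrix.smul_mulVec,
          Matrix.one_mulVec]
      funext i j
      have h1 := heval 1 (i, j)
      rw [hvanish (i, j)] at h1
      rw [hA1] at h1
      rw [hadjq1] at h1
      simp only [Polynomial.eval_zero, Pi.smul_apply, smul_eq_mul] at h1
      rw [hdeval 1, hA1] at h1
      have := sub_eq_zero.1 h1.symm
      exact mul_left_cancel₀ (det_lyapMat_ne_zero_of_setAn hAn) this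
    intro A₁ h₁ A₂ h₂ P₁ P₂ hP₁ hP₂
    rw [key A₁ h₁ P₁ hP₁, key A₂ h₂ P₂ hP₂]
  · -- easy direction
    intro H A₁ h₁ A₂ h₂ P₁ P₂ hP₁ hP₂
    exact H A₁ ⟨subset_affineSpan ℝ S h₁.1, h₁.2⟩ A₂ ⟨subset_affineSpan ℝ S h₂.1, h₂.2⟩
      P₁ P₂ hP₁ hP₂
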